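/- Let n, r, m be integers with n ≥ 1, 0 ≤ r ≤ n − 1 and 0 ≤ m ≤ n − r − 1. There exists a constant C depending only on n and r such that for every function h : (0,∞) → ℂ that is max(r,1)-times continuously differentiable on (0,∞) and vanishes for all sufficiently large x, one has ‖x^m h‖ ≤ C ( ‖x^n h^{(r)}‖ + ‖x^r h^{(r)}‖ ), the inequality being understood in [0,∞]. -/

import Mathlib

/-!
Hardy's inequality `∫₀^∞ x^a ‖h‖² ≤ (2/(a+1))² ∫₀^∞ x^(a+2) ‖h'‖²` (for `a > -1` and `h`
vanishing at infinity), applied `r` times, bounds `‖x^m h‖` by a multiple of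
`‖x^(m+r) h^(r)‖`; since `r ≤ m + r ≤ n`, the weight `x^(m+r)` is at most `x^n + x^r` on `(0, ∞)`.

Hardy's inequality itself: write `h x = -∫_x^∞ h'` and apply Cauchy–Schwarz against the weight
`t^(c+1)` with `c = (a+1)/2`, so that `‖h x‖² ≤ x^(-c)/c · ∫_x^∞ t^(c+1) ‖h' t‖² dt`;
integrating against `x^a` and exchanging the order of integration gives the constant `1/c²`.
-/

open MeasureTheory Set Filter Topology
open scoped ENNReal

theorem pow_le_pow_add_pow_of_le_of_le {R : Type*} [Semiring R] [LinearOrder R]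
    [IsOrderedRing R] {x : R} (hx : 0 ≤ x) {p q s : ℕ} (hpq : p ≤ q) (hqs : q ≤ s) :
    x ^ q ≤ x ^ s + x ^ p := by
  rcases le_total 1 x with h1 | h1
  · exact (pow_le_pow_right₀ h1 hqs).trans (le_add_of_nonneg_right (by positivity))
  · exact (pow_le_pow_of_le_one hx h1 hpq).trans (le_add_of_nonneg_left (by positivity))

theorem ENNReal.ofReal_mul_norm_sq {E : Type*} [SeminormedAddCommGroup E] (p : ℝ) (v : E) :
    ENNReal.ofReal (p * ‖v‖ ^ 2) = ENNReal.ofReal p * ‖v‖ₑ ^ 2 := by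
  rw [ENNReal.ofReal_mul' (by positivity), ENNReal.ofReal_pow (norm_nonneg _), ofReal_norm]

theorem setLIntegral_Ioi_pow_mul_norm_sq_le_add {E : Type*} [SeminormedAddCommGroup E]
    {f : ℝ → E} (hf : AEStronglyMeasurable f (volume.restrict (Ioi 0))) {p q s : ℕ}
    (hpq : p ≤ q) (hqs : q ≤ s) :
    ∫⁻ x in Ioi 0, ENNReal.ofReal (x ^ q * ‖f x‖ ^ 2) ≤
      (∫⁻ x in Ioi 0, ENNReal.ofReal (x ^ s * ‖f x‖ ^ 2)) +
        ∫⁻ x in Ioi 0, ENNReal.ofReal (x ^ p * ‖f x‖ ^ 2) := by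
  rw [← lintegral_add_left' (by fun_prop)]
  refine setLIntegral_mono' measurableSet_Ioi fun x (hx : 0 < x) => ?_
  rw [← ENNReal.ofReal_add (by positivity) (by positivity), ← add_mul]
  gcongr
  exact pow_le_pow_add_pow_of_le_of_le hx.le hpq hqs

theorem ENNReal.sq_lintegral_le_lintegral_mul_sq_mul_lintegral_inv {α : Type*}
    [MeasurableSpace α] {μ : Measure α} {f w : α → ℝ≥0∞} (hf : AEMeasurable f μ)
    (hw : AEMeasurable w μ) (hw0 : ∀ᵐ x ∂μ, w x ≠ 0) (hwt : ∀ᵐ x ∂μ, w x ≠ ∞) :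
    (∫⁻ x, f x ∂μ) ^ 2 ≤ (∫⁻ x, w x * f x ^ 2 ∂μ) * ∫⁻ x, (w x)⁻¹ ∂μ := by
  have hsplit : ∀ᵐ x ∂μ, f x = (w x * f x ^ 2) ^ (1/2 : ℝ) * (w x)⁻¹ ^ (1/2 : ℝ) := by
    filter_upwards [hw0, hwt] with x h0 ht
    rw [← ENNReal.mul_rpow_of_nonneg _ _ (by norm_num), mul_right_comm,
      ENNReal.mul_inv_cancel h0 ht, one_mul, ← ENNReal.rpow_natCast, ← ENNReal.rpow_mul]
    norm_num
  have holder := ENNReal.lintegral_mul_norm_pow_le (hw.mul (hf.pow_const 2)) hw.inv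
    (p := 1/2) (q := 1/2) (by norm_num) (by norm_num) (by norm_num)
  rw [lintegral_congr_ae hsplit]
  calc _ ≤ ((∫⁻ x, w x * f x ^ 2 ∂μ) ^ (1/2 : ℝ) *
          (∫⁻ x, (w x)⁻¹ ∂μ) ^ (1/2 : ℝ)) ^ 2 :=
        pow_le_pow_left' holder 2
    _ = _ := by
      rw [← ENNReal.mul_rpow_of_nonneg _ _ (by norm_num), ← ENNReal.rpow_natCast,
        ← ENNReal.rpow_mul]
      norm_num

theorem lintegral_mul_setLIntegral_Ioi_comm {μ ν : Measure ℝ} [SFinite μ] [SFinite ν]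
    {g F : ℝ → ℝ≥0∞} (hg : Measurable g) (hF : Measurable F) :
    ∫⁻ x, g x * ∫⁻ t in Ioi x, F t ∂ν ∂μ =
      ∫⁻ t, (∫⁻ x in Iio t, g x ∂μ) * F t ∂ν := by
  set G : ℝ × ℝ → ℝ≥0∞ := {q : ℝ × ℝ | q.1 < q.2}.indicator (fun q => g q.1 * F q.2)
  have hG : Measurable G := ((hg.comp measurable_fst).mul (hF.comp measurable_snd)).indicator
    (measurableSet_lt measurable_fst measurable_snd)
  have hG_Ioi : ∀ x t, G (x, t) = g x * (Ioi x).indicator F t := by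
    intro x t; by_cases hxt : x < t <;> simp [G, indicator, hxt]
  have hG_Iio : ∀ x t, G (x, t) = (Iio t).indicator g x * F t := by
    intro x t; by_cases hxt : x < t <;> simp [G, indicator, hxt]
  calc ∫⁻ x, g x * ∫⁻ t in Ioi x, F t ∂ν ∂μ
        = ∫⁻ x, ∫⁻ t, G (x, t) ∂ν ∂μ := by
        simp_rw [hG_Ioi, lintegral_const_mul _ (hF.indicator measurableSet_Ioi),
          lintegral_indicator measurableSet_Ioi]
    _ = ∫⁻ t, ∫⁻ x, G (x, t) ∂μ ∂ν := lintegral_lintegral_swap hG.aemeasurable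
    _ = _ := by
        simp_rw [hG_Iio, lintegral_mul_const _ (hg.indicator measurableSet_Iio),
          lintegral_indicator measurableSet_Iio]

theorem lintegral_Ioi_rpow_of_lt {a x : ℝ} (ha : a < -1) (hx : 0 < x) :
    ∫⁻ t in Ioi x, ENNReal.ofReal (t ^ a) = ENNReal.ofReal (-x ^ (a + 1) / (a + 1)) := by
  rw [← integral_Ioi_rpow_of_lt ha hx, ofReal_integral_eq_lintegral_ofReal
    (integrableOn_Ioi_rpow_of_lt ha hx)]
  filter_upwards [self_mem_ae_restrict measurableSet_Ioi] with t ht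
  exact Real.rpow_nonneg (hx.trans ht).le a

theorem lintegral_Ioo_zero_rpow {a t : ℝ} (ha : -1 < a) (ht : 0 ≤ t) :
    ∫⁻ x in Ioo 0 t, ENNReal.ofReal (x ^ a) = ENNReal.ofReal (t ^ (a + 1) / (a + 1)) := by
  have hint : IntegrableOn (fun x : ℝ => x ^ a) (Ioc 0 t) :=
    (intervalIntegrable_iff_integrableOn_Ioc_of_le ht).mp
      (intervalIntegral.intervalIntegrable_rpow' ha)
  rw [Measure.restrict_congr_set Ioo_ae_eq_Ioc, ← ofReal_integral_eq_lintegral_ofReal hint,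
    ← intervalIntegral.integral_of_le ht, integral_rpow (Or.inl ha),
    Real.zero_rpow (by linarith), sub_zero]
  filter_upwards [self_mem_ae_restrict measurableSet_Ioc] with x hx
  exact Real.rpow_nonneg hx.1.le a

section

variable {E : Type*} [NormedAddCommGroup E] [NormedSpace ℝ E]

theorem derivWithin_eventuallyEq_zero_atTop {h : ℝ → E} (s : Set ℝ) (h0 : h =ᶠ[atTop] 0) :
    derivWithin h s =ᶠ[atTop] 0 := by
  obtain ⟨ρ, hρ⟩ := eventually_atTop.1 h0
  filter_upwards [eventually_gt_atTop ρ] with x hx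
  have hloc : h =ᶠ[𝓝 x] 0 := eventually_of_mem (Ioi_mem_nhds hx) fun y hy => hρ y hy.le
  rw [(hloc.filter_mono nhdsWithin_le_nhds).derivWithin_eq hloc.eq_of_nhds, derivWithin_zero]

variable [CompleteSpace E]

theorem enorm_le_lintegral_Ioi_enorm_deriv {h : ℝ → E} {x : ℝ}
    (hd : ∀ t ∈ Ici x, DifferentiableAt ℝ h t) (h0 : Tendsto h atTop (𝓝 0)) :
    ‖h x‖ₑ ≤ ∫⁻ t in Ioi x, ‖deriv h t‖ₑ := by
  by_cases hint : IntegrableOn (deriv h) (Ioi x)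
  · have hftc := integral_Ioi_of_hasDerivAt_of_tendsto' (fun t ht => (hd t ht).hasDerivAt) hint h0
    calc ‖h x‖ₑ = ‖∫ t in Ioi x, deriv h t‖ₑ := by rw [hftc, zero_sub, enorm_neg]
      _ ≤ _ := enorm_integral_le_lintegral_enorm _
  · have : ∫⁻ t in Ioi x, ‖deriv h t‖ₑ = ∞ := by
      contrapose! hint
      exact ⟨(stronglyMeasurable_deriv h).aestronglyMeasurable, hint.lt_top⟩
    simp [this]

theorem enorm_sq_le_rpow_mul_lintegral_Ioi {h : ℝ → E} {c x : ℝ} (hc : 0 < c) (hx : 0 < x)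
    (hd : ∀ t ∈ Ici x, DifferentiableAt ℝ h t) (h0 : Tendsto h atTop (𝓝 0)) :
    ‖h x‖ₑ ^ 2 ≤ ENNReal.ofReal (x ^ (-c) / c) *
      ∫⁻ t in Ioi x, ENNReal.ofReal (t ^ (c + 1)) * ‖deriv h t‖ₑ ^ 2 := by
  have hw : ∀ t ∈ Ioi x, 0 < t ^ (c + 1) := fun t ht => Real.rpow_pos_of_pos (hx.trans ht) _
  have hinv : ∫⁻ t in Ioi x, (ENNReal.ofReal (t ^ (c + 1)))⁻¹ =
      ENNReal.ofReal (x ^ (-c) / c) := by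
    rw [setLIntegral_congr_fun measurableSet_Ioi (fun t ht => by
      rw [← ENNReal.ofReal_inv_of_pos (hw t ht), ← Real.rpow_neg (hx.trans ht).le]),
      lintegral_Ioi_rpow_of_lt (by linarith) hx]
    congr 1
    rw [show -(c + 1) + 1 = -c by ring, neg_div_neg_eq]
  calc ‖h x‖ₑ ^ 2 ≤ (∫⁻ t in Ioi x, ‖deriv h t‖ₑ) ^ 2 :=
        pow_le_pow_left' (enorm_le_lintegral_Ioi_enorm_deriv hd h0) 2
    _ ≤ (∫⁻ t in Ioi x, ENNReal.ofReal (t ^ (c + 1)) * ‖deriv h t‖ₑ ^ 2) *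
          ∫⁻ t in Ioi x, (ENNReal.ofReal (t ^ (c + 1)))⁻¹ :=
        ENNReal.sq_lintegral_le_lintegral_mul_sq_mul_lintegral_inv
          (stronglyMeasurable_deriv h).aestronglyMeasurable.enorm (by fun_prop)
          (ae_restrict_of_forall_mem measurableSet_Ioi fun t ht => by simpa using hw t ht)
          (ae_of_all _ fun _ => ENNReal.ofReal_ne_top)
    _ = _ := by rw [hinv, mul_comm]

theorem lintegral_rpow_mul_enorm_sq_le_deriv {h : ℝ → E} {a : ℝ} (ha : -1 < a)
    (hd : DifferentiableOn ℝ h (Ioi 0)) (h0 : Tendsto h atTop (𝓝 0)) :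
    ∫⁻ x in Ioi 0, ENNReal.ofReal (x ^ a) * ‖h x‖ₑ ^ 2 ≤
      ENNReal.ofReal ((2 / (a + 1)) ^ 2) *
        ∫⁻ x in Ioi 0, ENNReal.ofReal (x ^ (a + 2)) * ‖deriv h x‖ₑ ^ 2 := by
  -- `c` balances the exponents: `x^a * x^(-c) = x^(c-1)` and `t^c * t^(c+1) = t^(a+2)`.
  set c := (a + 1) / 2 with hc_def
  have hc : 0 < c := by linarith
  set G : ℝ → ℝ≥0∞ := fun t => ENNReal.ofReal (t ^ (c + 1)) * ‖deriv h t‖ₑ ^ 2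
    with hG_def
  have hG : Measurable G := by
    have := (stronglyMeasurable_deriv h).enorm
    fun_prop
  have hpointwise : ∀ x ∈ Ioi (0:ℝ), ENNReal.ofReal (x ^ a) * ‖h x‖ₑ ^ 2 ≤
      ENNReal.ofReal c⁻¹ * (ENNReal.ofReal (x ^ (c - 1)) * ∫⁻ t in Ioi x, G t) := by
    intro x (hx : 0 < x)
    have hd' : ∀ t ∈ Ici x, DifferentiableAt ℝ h t := fun t ht =>
      hd.differentiableAt (isOpen_Ioi.mem_nhds (mem_Ioi.2 (lt_of_lt_of_le hx ht)))
    calc _ ≤ ENNReal.ofReal (x ^ a) *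
          (ENNReal.ofReal (x ^ (-c) / c) * ∫⁻ t in Ioi x, G t) := by
          gcongr; exact enorm_sq_le_rpow_mul_lintegral_Ioi hc hx hd' h0
      _ = _ := by
          rw [← mul_assoc, ← mul_assoc, ← ENNReal.ofReal_mul (by positivity),
            ← ENNReal.ofReal_mul (by positivity)]
          congr 2
          rw [div_eq_mul_inv, ← mul_assoc, ← Real.rpow_add hx, mul_comm]
          congr 2
          ring
  have hinner : ∀ t ∈ Ioi (0:ℝ),
      (∫⁻ x in Iio t, ENNReal.ofReal (x ^ (c - 1)) ∂volume.restrict (Ioi 0)) * G t =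
        ENNReal.ofReal c⁻¹ * (ENNReal.ofReal (t ^ (a + 2)) * ‖deriv h t‖ₑ ^ 2) := by
    intro t (ht : 0 < t)
    rw [Measure.restrict_restrict measurableSet_Iio, Iio_inter_Ioi,
      lintegral_Ioo_zero_rpow (by linarith) ht.le, sub_add_cancel, hG_def, ← mul_assoc,
      ← mul_assoc, ← ENNReal.ofReal_mul (by positivity), ← ENNReal.ofReal_mul (by positivity)]
    congr 2
    rw [div_eq_mul_inv, mul_right_comm, ← Real.rpow_add ht, mul_comm]
    congr 2
    ring
  calc ∫⁻ x in Ioi 0, ENNReal.ofReal (x ^ a) * ‖h x‖ₑ ^ 2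
      ≤ ∫⁻ x in Ioi 0, ENNReal.ofReal c⁻¹ *
          (ENNReal.ofReal (x ^ (c - 1)) * ∫⁻ t in Ioi x, G t) :=
        setLIntegral_mono' measurableSet_Ioi hpointwise
    _ = ENNReal.ofReal c⁻¹ * ∫⁻ x in Ioi 0, ENNReal.ofReal (x ^ (c - 1)) *
          ∫⁻ t in Ioi x, G t ∂volume.restrict (Ioi 0) := by
        rw [lintegral_const_mul' _ _ ENNReal.ofReal_ne_top]
        congr 1
        refine setLIntegral_congr_fun measurableSet_Ioi fun x (hx : 0 < x) => ?_
        rw [Measure.restrict_restrict measurableSet_Ioi, Ioi_inter_Ioi, max_eq_left hx.le]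
    _ = ENNReal.ofReal c⁻¹ * ∫⁻ t in Ioi 0,
          (∫⁻ x in Iio t, ENNReal.ofReal (x ^ (c - 1)) ∂volume.restrict (Ioi 0)) * G t := by
        rw [lintegral_mul_setLIntegral_Ioi_comm (by fun_prop) hG]
    _ = _ := by
        rw [setLIntegral_congr_fun measurableSet_Ioi hinner,
          lintegral_const_mul' _ _ ENNReal.ofReal_ne_top, ← mul_assoc,
          ← ENNReal.ofReal_mul (by positivity)]
        congr 2
        rw [hc_def]
        field_simp

theorem lintegral_rpow_mul_enorm_sq_le_iteratedDerivWithin (r : ℕ) {h : ℝ → E} {a : ℝ}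
    (ha : -1 < a) (hh : ContDiffOn ℝ r h (Ioi 0)) (h0 : h =ᶠ[atTop] 0) :
    ∫⁻ x in Ioi 0, ENNReal.ofReal (x ^ a) * ‖h x‖ₑ ^ 2 ≤
      ENNReal.ofReal (∏ k ∈ Finset.range r, (2 / (a + 2 * k + 1)) ^ 2) *
        ∫⁻ x in Ioi 0, ENNReal.ofReal (x ^ (a + 2 * r)) *
          ‖iteratedDerivWithin r h (Ioi 0) x‖ₑ ^ 2 := by
  induction r generalizing h a with
  | zero => simp
  | succ r ih =>
    have hderiv : ∫⁻ x in Ioi 0, ENNReal.ofReal (x ^ (a + 2)) * ‖deriv h x‖ₑ ^ 2 =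
        ∫⁻ x in Ioi 0, ENNReal.ofReal (x ^ (a + 2)) * ‖derivWithin h (Ioi 0) x‖ₑ ^ 2 :=
      setLIntegral_congr_fun measurableSet_Ioi fun x hx => by
        rw [derivWithin_of_isOpen isOpen_Ioi hx]
    have hstep := ih (a := a + 2) (by linarith)
      (hh.derivWithin isOpen_Ioi.uniqueDiffOn (by norm_cast))
      (derivWithin_eventuallyEq_zero_atTop _ h0)
    calc _ ≤ ENNReal.ofReal ((2 / (a + 1)) ^ 2) *
          ∫⁻ x in Ioi 0, ENNReal.ofReal (x ^ (a + 2)) * ‖deriv h x‖ₑ ^ 2 :=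
          lintegral_rpow_mul_enorm_sq_le_deriv ha (hh.differentiableOn (by simp))
            (tendsto_const_nhds.congr' h0.symm)
      _ ≤ ENNReal.ofReal ((2 / (a + 1)) ^ 2) *
          (ENNReal.ofReal (∏ k ∈ Finset.range r, (2 / (a + 2 + 2 * k + 1)) ^ 2) *
            ∫⁻ x in Ioi 0, ENNReal.ofReal (x ^ (a + 2 + 2 * r)) *
              ‖iteratedDerivWithin r (derivWithin h (Ioi 0)) (Ioi 0) x‖ₑ ^ 2) := by
          rw [hderiv]
          gcongr
      _ = _ := by
          rw [iteratedDerivWithin_succ', ← mul_assoc, ← ENNReal.ofReal_mul (by positivity),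
            Finset.prod_range_succ']
          push_cast
          ring_nf

end

theorem weighted_lower_order_estimate_general
    (n r m : ℕ) (hm : m + r + 1 ≤ n) :
    ∃ C : ℝ, 0 < C ∧
      ∀ h : ℝ → ℂ, ContDiffOn ℝ ((max r 1 : ℕ) : ℕ∞) h (Set.Ioi 0) →
        (∃ ρ : ℝ, ∀ x, ρ ≤ x → h x = 0) →
        (∫⁻ x in Set.Ioi (0:ℝ),
            ENNReal.ofReal (x ^ (2*m) * ‖h x‖^2)) ^ (1/2 : ℝ)
          ≤ ENNReal.ofReal C *
            ((∫⁻ x in Set.Ioi (0:ℝ),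
                ENNReal.ofReal (x ^ (2*n) *
                  ‖iteratedDerivWithin r h (Set.Ioi 0) x‖^2)) ^ (1/2 : ℝ)
             + (∫⁻ x in Set.Ioi (0:ℝ),
                ENNReal.ofReal (x ^ (2*r) *
                  ‖iteratedDerivWithin r h (Set.Ioi 0) x‖^2)) ^ (1/2 : ℝ)) := by
  set K : ℝ := ∏ k ∈ Finset.range r, (2 / ((2 * m : ℕ) + 2 * k + 1 : ℝ)) ^ 2
  have hK : 0 < K := Finset.prod_pos fun k _ => by positivity
  refine ⟨K ^ (1/2 : ℝ), by positivity, fun h hh hvan => ?_⟩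
  have hhr : ContDiffOn ℝ r h (Ioi 0) := hh.of_le (by exact_mod_cast le_max_left r 1)
  have hhardy := lintegral_rpow_mul_enorm_sq_le_iteratedDerivWithin r (a := (2 * m : ℕ))
    (neg_one_lt_zero.trans_le (Nat.cast_nonneg _)) hhr (eventually_atTop.2 hvan)
  rw [show ((2 * m : ℕ) : ℝ) + 2 * r = (2 * (m + r) : ℕ) by push_cast; ring] at hhardy
  simp only [Real.rpow_natCast, ← ENNReal.ofReal_mul_norm_sq] at hhardy
  have hsplit := setLIntegral_Ioi_pow_mul_norm_sq_le_add
    ((hhr.continuousOn_iteratedDerivWithin le_rfl isOpen_Ioi.uniqueDiffOn).aestronglyMeasurable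
      measurableSet_Ioi) (by omega : 2 * r ≤ 2 * (m + r)) (by omega : 2 * (m + r) ≤ 2 * n)
  refine (ENNReal.rpow_le_rpow (z := 1/2) (hhardy.trans (mul_le_mul' le_rfl hsplit))
    (by norm_num)).trans ?_
  rw [ENNReal.mul_rpow_of_nonneg _ _ (by norm_num),
    ENNReal.ofReal_rpow_of_nonneg hK.le (by norm_num)]
  gcongr
  exact ENNReal.rpow_add_le_add_rpow _ _ (by norm_num) (by norm_num)

/-- The weighted interpolation estimate `‖x^m h‖ ≤ C(‖x^n h^{(r)}‖ + ‖x^r h^{(r)}‖)`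
from the end of Step 1 of the proof of Theorem 3.1. -/
theorem weighted_lower_order_estimate
    (n r m : ℕ) (hn : 1 ≤ n) (hr : r + 1 ≤ n) (hm : m + r + 1 ≤ n) :
    ∃ C : ℝ, 0 < C ∧
      ∀ h : ℝ → ℂ, ContDiffOn ℝ ((max r 1 : ℕ) : ℕ∞) h (Set.Ioi 0) →
        (∃ ρ : ℝ, ∀ x, ρ ≤ x → h x = 0) →
        (∫⁻ x in Set.Ioi (0:ℝ),
            ENNReal.ofReal (x ^ (2*m) * ‖h x‖^2)) ^ (1/2 : ℝ)
          ≤ ENNReal.ofReal C *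
            ((∫⁻ x in Set.Ioi (0:ℝ),
                ENNReal.ofReal (x ^ (2*n) *
                  ‖iteratedDerivWithin r h (Set.Ioi 0) x‖^2)) ^ (1/2 : ℝ)
             + (∫⁻ x in Set.Ioi (0:ℝ),
                ENNReal.ofReal (x ^ (2*r) *
                  ‖iteratedDerivWithin r h (Set.Ioi 0) x‖^2)) ^ (1/2 : ℝ)) :=
  weighted_lower_order_estimate_general n r m hm
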